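/- arXiv:2005.03287 — 2 statements merged into one kernel-verified Lean document; each statement's English description precedes it below -/
import Mathlib

section
/- If A ∈ ℝ^{n×n} is nonsingular and ρ(A^{-1} B D̄) < 1 for every diagonal matrix D̄ with diagonal entries in [−1,1], then the GAVE Ax + B|x| = b has a unique solution for every b ∈ ℝ^n. -/
/-!
For every diagonal `D` with entries in `[-1, 1]`, `A + B D = A (1 + A⁻¹ B D)` is invertible, since
`-1` is not an eigenvalue of `A⁻¹ B D`. Writing `|x| - |y| = D (x - y)` for such a `D` gives
`F_t x - F_t y = (A + t B D) (x - y)` for `F_t x = A x + t B |x|` and `t ∈ [-1, 1]`; as the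
matrices `A + B D` form a compact set of invertible matrices, all `F_t` are antilipschitz with one
constant. This gives injectivity of `F_1`, and lets surjectivity propagate from `F_0 = A` to `F_1`
in steps of uniform size, each step a contraction argument for the Lipschitz perturbation
`(s - t) B |·|`.
-/

open Matrix

/-- A square real matrix is a `P`-matrix if all of its principal minors are positive. -/
def IsPMatrix {n : ℕ} (M : Matrix (Fin n) (Fin n) ℝ) : Prop :=
  ∀ s : Finset (Fin n), s.Nonempty →
    0 < (M.submatrix (fun i : s => (i : Fin n)) (fun i : s => (i : Fin n))).det

/-- The (unordered) singular values of a real square matrix: square roots of the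
eigenvalues of `Aᵀ * A`. -/
noncomputable def singVals {n : ℕ} (A : Matrix (Fin n) (Fin n) ℝ) : Fin n → ℝ :=
  fun i => Real.sqrt ((Matrix.isHermitian_conjTranspose_mul_self A).eigenvalues i)

/-- `svalsDecr A i` is the `i`-th largest singular value of `A` (so `svalsDecr A 0 = σ₁`). -/
noncomputable def svalsDecr {n : ℕ} (A : Matrix (Fin n) (Fin n) ℝ) : Fin n → ℝ :=
  fun i => singVals A (Tuple.sort (singVals A) (Fin.rev i))

/-- The maximal singular value `σ₁`. -/
noncomputable def maxSV {n : ℕ} (A : Matrix (Fin n) (Fin n) ℝ) : ℝ :=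
  ⨆ i, singVals A i

/-- The minimal singular value `σₙ`. -/
noncomputable def minSV {n : ℕ} (A : Matrix (Fin n) (Fin n) ℝ) : ℝ :=
  ⨅ i, singVals A i

/-- The spectral radius of a real square matrix (as the spectral radius of its
complexification), valued in `ℝ≥0∞`. -/
noncomputable def specRad {n : ℕ} (A : Matrix (Fin n) (Fin n) ℝ) : ENNReal :=
  spectralRadius ℂ (A.map (Complex.ofReal))

open scoped NNReal

theorem isUnit_one_add_of_specRad_lt_one {n : ℕ} {M : Matrix (Fin n) (Fin n) ℝ}
    (h : specRad M < 1) : IsUnit (1 + M) := by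
  have hres : (-1 : ℂ) ∈ resolventSet ℂ (M.map Complex.ofReal) :=
    spectrum.mem_resolventSet_of_spectralRadius_lt (by simpa [specRad] using h)
  have hcomplexify : algebraMap ℂ _ (-1) - M.map Complex.ofReal =
      -Complex.ofRealHom.mapMatrix (1 + M) := by
    rw [map_neg, map_one, map_add, map_one, neg_add, sub_eq_add_neg]
    rfl
  rw [resolventSet, Set.mem_ofPred_eq, hcomplexify, IsUnit.neg_iff, isUnit_iff_isUnit_det,
    ← RingHom.map_det, isUnit_iff_ne_zero, map_ne_zero] at hres
  exact (isUnit_iff_isUnit_det _).2 hres.isUnit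

theorem isUnit_add_of_specRad_inv_mul_lt_one {n : ℕ} {A C : Matrix (Fin n) (Fin n) ℝ}
    (hA : IsUnit A) (h : specRad (A⁻¹ * C) < 1) : IsUnit (A + C) := by
  have hfactor : A + C = A * (1 + A⁻¹ * C) := by
    rw [Matrix.mul_add, Matrix.mul_one,
      mul_nonsing_inv_cancel_left _ _ ((isUnit_iff_isUnit_det A).1 hA)]
  rw [hfactor]
  exact hA.mul (isUnit_one_add_of_specRad_lt_one h)

theorem exists_abs_sub_abs_eq_mul_sub (a b : ℝ) :
    ∃ d ∈ Set.Icc (-1 : ℝ) 1, |a| - |b| = d * (a - b) := by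
  rcases eq_or_ne a b with rfl | hab
  · exact ⟨0, by norm_num, by simp⟩
  have hne : a - b ≠ 0 := sub_ne_zero.2 hab
  refine ⟨(|a| - |b|) / (a - b), ?_, by field_simp⟩
  rw [Set.mem_Icc, ← abs_le, abs_div, div_le_one (abs_pos.2 hne)]
  exact abs_abs_sub_abs_le_abs_sub a b

theorem AntilipschitzWith.surjective_add {α E : Type*} [MetricSpace α] [CompleteSpace α]
    [NormedAddCommGroup E] {f g : α → E} {K L : ℝ≥0} (hf : AntilipschitzWith K f)
    (hfs : Function.Surjective f) (hg : LipschitzWith L g) (hKL : K * L < 1) :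
    Function.Surjective (f + g) := by
  intro b
  have hΦ : ContractingWith (K * L) fun x => Function.surjInv hfs (b - g x) := by
    refine ⟨hKL, ?_⟩
    simpa [Function.comp_def] using (hf.to_rightInverse (Function.rightInverse_surjInv hfs)).comp
      ((IsometryEquiv.subLeft b).isometry.lipschitz.comp hg)
  obtain ⟨x, hx, -⟩ := hΦ.exists_fixedPoint (Function.surjInv hfs b) (edist_lt_top _ _).ne
  refine ⟨x, ?_⟩
  have hfx : f x = b - g x := by
    conv_lhs => rw [← hx]
    exact Function.surjInv_eq hfs _
  simp [hfx]

theorem Real.induction_zero_one_of_step_le {P : ℝ → Prop} {δ : ℝ} (hδ : 0 < δ) (h0 : P 0)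
    (hstep : ∀ t s, 0 ≤ t → t ≤ s → s ≤ 1 → s - t ≤ δ → P t → P s) : P 1 := by
  set N := ⌈δ⁻¹⌉₊
  have hN : (0 : ℝ) < N := Nat.cast_pos.2 (Nat.ceil_pos.2 (inv_pos.2 hδ))
  have hNδ : (N : ℝ)⁻¹ ≤ δ := inv_le_of_inv_le₀ hδ (Nat.le_ceil _)
  have hk : ∀ k ≤ N, P (k / N) := by
    intro k
    induction k with
    | zero => simpa using h0
    | succ k ih =>
      intro hkN
      refine hstep _ _ (by positivity) (by gcongr; simp) ?_ ?_ (ih (by omega))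
      · rw [div_le_one hN]
        exact_mod_cast hkN
      · rw [← sub_div, Nat.cast_succ, add_sub_cancel_left, one_div]
        exact hNδ
  simpa [hN.ne'] using hk N le_rfl

theorem surjective_add_of_forall_antilipschitzWith_add_smul {α E : Type*} [MetricSpace α]
    [CompleteSpace α] [NormedAddCommGroup E] [NormedSpace ℝ E] {f g : α → E} {K L : ℝ≥0}
    (hf : Function.Surjective f) (hg : LipschitzWith L g)
    (hanti : ∀ t ∈ Set.Icc (0 : ℝ) 1, AntilipschitzWith K (f + t • g)) :
    Function.Surjective (f + g) := by
  set δ : ℝ := ((K : ℝ) * L + 1)⁻¹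
  have hδ : 0 < δ := by positivity
  suffices ∀ t s, 0 ≤ t → t ≤ s → s ≤ 1 → s - t ≤ δ →
      Function.Surjective (f + t • g) → Function.Surjective (f + s • g) by
    simpa using Real.induction_zero_one_of_step_le (P := fun t => Function.Surjective (f + t • g))
      hδ (by simpa using hf) this
  intro t s ht hts hs hstδ hsurj
  have hsplit : f + s • g = (f + t • g) + (s - t) • g := by
    rw [sub_smul, add_assoc, add_sub_cancel]
  have hcontract : K * (‖s - t‖₊ * L) < 1 := by
    rw [← NNReal.coe_lt_coe, NNReal.coe_mul, NNReal.coe_mul, NNReal.coe_one, coe_nnnorm,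
      Real.norm_of_nonneg (sub_nonneg.2 hts)]
    have hKL : (K * L : ℝ) * δ < 1 := by
      rw [mul_inv_lt_iff₀ (by positivity)]
      linarith
    nlinarith [mul_le_mul_of_nonneg_left hstδ (by positivity : (0 : ℝ) ≤ K * L)]
  rw [hsplit]
  exact (hanti t ⟨ht, hts.trans hs⟩).surjective_add hsurj
    ((lipschitzWith_smul (s - t)).comp hg) hcontract

section LinftyOpNorm

attribute [local instance] Matrix.linftyOpNormedAddCommGroup Matrix.linftyOpNormedRing

variable {ι : Type*} [Fintype ι] [DecidableEq ι]

theorem Matrix.exists_norm_le_mul_norm_mulVec_of_isCompact {𝕜 : Type*} [NormedField 𝕜]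
    {S : Set (Matrix ι ι 𝕜)} (hS : IsCompact S) (hunit : ∀ M ∈ S, IsUnit M) :
    ∃ K : ℝ≥0, ∀ M ∈ S, ∀ v : ι → 𝕜, ‖v‖ ≤ K * ‖M *ᵥ v‖ := by
  have hdet : ∀ M ∈ S, IsUnit M.det := fun M hM => (isUnit_iff_isUnit_det M).1 (hunit M hM)
  have hcont : ContinuousOn Inv.inv S := fun M hM =>
    (continuousAt_matrix_inv M
      (NormedRing.inverse_continuousAt (hdet M hM).unit)).continuousWithinAt
  obtain ⟨C, hC⟩ := hS.exists_bound_of_continuousOn hcont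
  refine ⟨C.toNNReal, fun M hM v => ?_⟩
  calc ‖v‖ = ‖M⁻¹ *ᵥ (M *ᵥ v)‖ := by
        rw [mulVec_mulVec, nonsing_inv_mul _ (hdet M hM), one_mulVec]
    _ ≤ ‖M⁻¹‖ * ‖M *ᵥ v‖ := linfty_opNorm_mulVec _ _
    _ ≤ C.toNNReal * ‖M *ᵥ v‖ := by
        gcongr
        exact (hC M hM).trans (Real.le_coe_toNNReal C)

theorem Matrix.lipschitzWith_mulVec_abs (B : Matrix ι ι ℝ) :
    LipschitzWith ‖B‖₊ fun x : ι → ℝ => B *ᵥ |x| := by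
  refine LipschitzWith.of_dist_le_mul fun x y => ?_
  have habs : ‖|x| - |y|‖ ≤ ‖x - y‖ :=
    (pi_norm_le_iff_of_nonneg (norm_nonneg _)).2 fun i =>
      (abs_abs_sub_abs_le_abs_sub (x i) (y i)).trans (norm_le_pi_norm (x - y) i)
  rw [dist_eq_norm, dist_eq_norm, coe_nnnorm, ← mulVec_sub]
  exact (linfty_opNorm_mulVec _ _).trans (by gcongr)

end LinftyOpNorm

section AbsoluteValueEquation

variable {ι : Type*} [Fintype ι] [DecidableEq ι]

theorem Matrix.mulVec_add_smul_mulVec_abs_sub (A B : Matrix ι ι ℝ) (t : ℝ) {x y d : ι → ℝ}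
    (hd : |x| - |y| = d * (x - y)) :
    (A *ᵥ x + t • (B *ᵥ |x|)) - (A *ᵥ y + t • (B *ᵥ |y|)) =
      (A + B * diagonal (t • d)) *ᵥ (x - y) := by
  have hdiag : diagonal (t • d) *ᵥ (x - y) = t • (|x| - |y|) := by
    ext i
    simp [smul_mulVec, mulVec_diagonal, hd]
  rw [add_mulVec, ← mulVec_mulVec, hdiag, mulVec_smul, mulVec_sub, mulVec_sub, smul_sub]
  abel

theorem Matrix.exists_antilipschitzWith_mulVec_add_smul_mulVec_abs {A B : Matrix ι ι ℝ}
    (hunit : ∀ d : ι → ℝ, (∀ i, d i ∈ Set.Icc (-1 : ℝ) 1) → IsUnit (A + B * diagonal d)) :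
    ∃ K, ∀ t ∈ Set.Icc (-1 : ℝ) 1,
      AntilipschitzWith K ((A *ᵥ ·) + t • fun x => B *ᵥ |x|) := by
  set S := (fun d => A + B * diagonal d) '' Set.univ.pi fun _ : ι => Set.Icc (-1 : ℝ) 1
  have hS : IsCompact S :=
    (isCompact_univ_pi fun _ => isCompact_Icc).image (by fun_prop)
  obtain ⟨K, hK⟩ := exists_norm_le_mul_norm_mulVec_of_isCompact hS (by
    rintro _ ⟨d, hd, rfl⟩
    exact hunit d fun i => hd i (Set.mem_univ i))
  refine ⟨K, fun t ht => AntilipschitzWith.of_le_mul_dist fun x y => ?_⟩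
  choose d hd hxy using fun i => exists_abs_sub_abs_eq_mul_sub (x i) (y i)
  have htd : ∀ i, (t • d) i ∈ Set.Icc (-1 : ℝ) 1 := fun i => by
    have hdi := hd i
    rw [Set.mem_Icc, ← abs_le] at ht hdi ⊢
    rw [Pi.smul_apply, smul_eq_mul, abs_mul]
    exact mul_le_one₀ ht (abs_nonneg _) hdi
  rw [dist_eq_norm, dist_eq_norm, Pi.add_apply, Pi.add_apply, Pi.smul_apply, Pi.smul_apply,
    mulVec_add_smul_mulVec_abs_sub A B t (funext hxy)]
  exact hK _ ⟨t • d, fun i _ => htd i, rfl⟩ _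

end AbsoluteValueEquation

theorem stmt10 {n : ℕ} (A B : Matrix (Fin n) (Fin n) ℝ) (hA : IsUnit A)
    (h : ∀ d : Fin n → ℝ, (∀ i, d i ∈ Set.Icc (-1 : ℝ) 1) →
      specRad (A⁻¹ * B * Matrix.diagonal d) < 1) :
    ∀ b : Fin n → ℝ, ∃! x : Fin n → ℝ, A *ᵥ x + B *ᵥ |x| = b := by
  have hunit : ∀ d : Fin n → ℝ, (∀ i, d i ∈ Set.Icc (-1 : ℝ) 1) →
      IsUnit (A + B * diagonal d) := fun d hd =>
    isUnit_add_of_specRad_inv_mul_lt_one hA (by simpa only [Matrix.mul_assoc] using h d hd)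
  obtain ⟨K, hK⟩ := exists_antilipschitzWith_mulVec_add_smul_mulVec_abs hunit
  have hinj : Function.Injective ((A *ᵥ ·) + fun x => B *ᵥ |x|) := by
    simpa using (hK 1 (by norm_num)).injective
  have hsurj : Function.Surjective ((A *ᵥ ·) + fun x => B *ᵥ |x|) :=
    surjective_add_of_forall_antilipschitzWith_add_smul (mulVec_surjective_iff_isUnit.2 hA)
      (lipschitzWith_mulVec_abs B) fun t ht => hK t (Set.Icc_subset_Icc (by norm_num) le_rfl ht)
  exact Function.Bijective.existsUnique ⟨hinj, hsurj⟩
end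

section
/- If A ∈ ℝ^{n×n} is nonsingular and σ_1(A^{-1}B) < 1 (the largest singular value of A^{-1}B is less than 1), then the GAVE Ax + B|x| = b has a unique solution for every b ∈ ℝ^n. -/
open Matrix

/-!
Multiplying by `A⁻¹`, the solutions of `A x + B |x| = b` are the fixed points of
`x ↦ A⁻¹ b - A⁻¹ B |x|`. In the Euclidean norm `|·|` is 1-Lipschitz and, by the spectral theorem
for `Mᵀ M`, `‖M v‖ ≤ σ₁(M) ‖v‖`; so for `σ₁(A⁻¹ B) < 1` this map is a contraction of `ℝⁿ`, and the
Banach fixed point theorem gives exactly one solution.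
-/

open WithLp Function

namespace LinearMap.IsSymmetric

variable {𝕜 E : Type*} [RCLike 𝕜] [NormedAddCommGroup E] [InnerProductSpace 𝕜 E]
  [FiniteDimensional 𝕜 E] {T : E →ₗ[𝕜] E} {n : ℕ}

theorem re_inner_map_self_le (hT : T.IsSymmetric) (hn : Module.finrank 𝕜 E = n) {c : ℝ}
    (hc : ∀ i, hT.eigenvalues hn i ≤ c) (v : E) : RCLike.re (inner 𝕜 (T v) v) ≤ c * ‖v‖ ^ 2 := by
  set b := hT.eigenvectorBasis hn
  rw [← b.repr.inner_map_map, ← b.repr.norm_map, EuclideanSpace.norm_sq_eq, PiLp.inner_apply,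
    map_sum, Finset.mul_sum]
  gcongr with i
  rw [eigenvectorBasis_apply_self_apply, ← smul_eq_mul, inner_smul_left, RCLike.conj_ofReal,
    RCLike.re_ofReal_mul, inner_self_eq_norm_sq]
  gcongr
  exact hc i

end LinearMap.IsSymmetric

namespace Matrix

variable {m ι : Type*} [Fintype m] [Fintype ι] [DecidableEq ι]

theorem IsHermitian.re_inner_mulVec_self_le {𝕜 : Type*} [RCLike 𝕜] {H : Matrix ι ι 𝕜}
    (hH : H.IsHermitian) {c : ℝ} (hc : ∀ i, hH.eigenvalues i ≤ c) (v : EuclideanSpace 𝕜 ι) :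
    RCLike.re (inner 𝕜 (toLp 2 (H *ᵥ ofLp v)) v) ≤ c * ‖v‖ ^ 2 :=
  (isSymmetric_toEuclideanLin_iff.mpr hH).re_inner_map_self_le finrank_euclideanSpace
    (fun j => by
      simpa [IsHermitian.eigenvalues, IsHermitian.eigenvalues₀] using
        hc (Fintype.equivOfCardEq (Fintype.card_fin _) j)) v

theorem norm_toLp_mulVec_sq_le (M : Matrix m ι ℝ) {c : ℝ}
    (hc : ∀ i, (isHermitian_conjTranspose_mul_self M).eigenvalues i ≤ c) (v : ι → ℝ) :
    ‖toLp 2 (M *ᵥ v)‖ ^ 2 ≤ c * ‖toLp 2 v‖ ^ 2 := by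
  have hquad : ‖toLp 2 (M *ᵥ v)‖ ^ 2 = inner ℝ (toLp 2 ((Mᴴ * M) *ᵥ v)) (toLp 2 v) := by
    rw [← real_inner_self_eq_norm_sq, EuclideanSpace.inner_toLp_toLp,
      EuclideanSpace.inner_toLp_toLp]
    simp [dotProduct_mulVec, vecMul_transpose, ← mulVec_mulVec]
  rw [hquad]
  exact (isHermitian_conjTranspose_mul_self M).re_inner_mulVec_self_le hc (toLp 2 v)

end Matrix

section SingularValues

variable {n : ℕ}

theorem maxSV_nonneg (M : Matrix (Fin n) (Fin n) ℝ) : 0 ≤ maxSV M :=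
  Real.iSup_nonneg fun _ => Real.sqrt_nonneg _

theorem eigenvalues_conjTranspose_mul_self_le_maxSV_sq (M : Matrix (Fin n) (Fin n) ℝ)
    (i : Fin n) :
    (isHermitian_conjTranspose_mul_self M).eigenvalues i ≤ maxSV M ^ 2 := by
  rw [← Real.sq_sqrt (eigenvalues_conjTranspose_mul_self_nonneg M i)]
  gcongr
  exact le_ciSup (Set.finite_range (singVals M)).bddAbove i

theorem norm_toLp_mulVec_le_maxSV (M : Matrix (Fin n) (Fin n) ℝ) (v : Fin n → ℝ) :
    ‖toLp 2 (M *ᵥ v)‖ ≤ maxSV M * ‖toLp 2 v‖ :=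
  le_of_pow_le_pow_left₀ two_ne_zero (mul_nonneg (maxSV_nonneg M) (norm_nonneg _)) <| by
    rw [mul_pow]
    exact norm_toLp_mulVec_sq_le M (eigenvalues_conjTranspose_mul_self_le_maxSV_sq M) v

end SingularValues

theorem ContractingWith.existsUnique_isFixedPt {α : Type*} [MetricSpace α] [CompleteSpace α]
    [Nonempty α] {K : NNReal} {f : α → α} (hf : ContractingWith K f) : ∃! x, IsFixedPt f x :=
  ⟨fixedPoint f hf, hf.fixedPoint_isFixedPt, fun _ hx => hf.fixedPoint_unique hx⟩

section GAVE

variable {ι : Type*} [Fintype ι]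

theorem norm_toLp_abs_sub_abs_le (x y : ι → ℝ) : ‖toLp 2 (|x| - |y|)‖ ≤ ‖toLp 2 (x - y)‖ := by
  simp only [EuclideanSpace.norm_eq]
  gcongr with i
  simpa using abs_abs_sub_abs_le_abs_sub (x i) (y i)

/-- The fixed-point form `x = c - M |x|` of the GAVE, on `EuclideanSpace` so that the metric is
the 2-norm. -/
noncomputable def gaveMap (M : Matrix ι ι ℝ) (c : ι → ℝ) (y : EuclideanSpace ℝ ι) :
    EuclideanSpace ℝ ι :=
  toLp 2 (c - M *ᵥ |ofLp y|)

theorem lipschitzWith_gaveMap {M : Matrix ι ι ℝ} {K : ℝ} (hK : 0 ≤ K)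
    (hM : ∀ v, ‖toLp 2 (M *ᵥ v)‖ ≤ K * ‖toLp 2 v‖) (c : ι → ℝ) :
    LipschitzWith K.toNNReal (gaveMap M c) :=
  LipschitzWith.of_dist_le' fun x y => calc
    dist (gaveMap M c x) (gaveMap M c y) = ‖toLp 2 (M *ᵥ (|ofLp y| - |ofLp x|))‖ := by
      rw [dist_eq_norm, gaveMap, gaveMap, ← toLp_sub, mulVec_sub, sub_sub_sub_cancel_left]
    _ ≤ K * ‖toLp 2 (|ofLp y| - |ofLp x|)‖ := hM _
    _ ≤ K * ‖toLp 2 (ofLp y - ofLp x)‖ := by gcongr; exact norm_toLp_abs_sub_abs_le _ _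
    _ = K * dist x y := by rw [dist_comm, dist_eq_norm, toLp_sub, toLp_ofLp, toLp_ofLp]

theorem isFixedPt_gaveMap_toLp_iff [DecidableEq ι] {A B : Matrix ι ι ℝ} (hA : IsUnit A)
    (b x : ι → ℝ) :
    IsFixedPt (gaveMap (A⁻¹ * B) (A⁻¹ *ᵥ b)) (toLp 2 x) ↔ A *ᵥ x + B *ᵥ |x| = b := by
  have hinj : Injective (A⁻¹ *ᵥ ·) := mulVec_injective_iff_isUnit.2 (isUnit_nonsing_inv_iff.2 hA)
  rw [← hinj.eq_iff, IsFixedPt, gaveMap, ofLp_toLp, (toLp_injective 2).eq_iff, sub_eq_iff_eq_add,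
    mulVec_add, mulVec_mulVec, mulVec_mulVec, nonsing_inv_mul _ ((isUnit_iff_isUnit_det A).1 hA),
    one_mulVec, eq_comm]

end GAVE

theorem stmt13 {n : ℕ} (A B : Matrix (Fin n) (Fin n) ℝ) (hA : IsUnit A)
    (h : maxSV (A⁻¹ * B) < 1) :
    ∀ b : Fin n → ℝ, ∃! x : Fin n → ℝ, A *ᵥ x + B *ᵥ |x| = b := by
  intro b
  have hf : ContractingWith (maxSV (A⁻¹ * B)).toNNReal (gaveMap (A⁻¹ * B) (A⁻¹ *ᵥ b)) :=
    ⟨by simpa using h, lipschitzWith_gaveMap (maxSV_nonneg _) (norm_toLp_mulVec_le_maxSV _) _⟩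
  rw [(WithLp.equiv 2 (Fin n → ℝ)).symm.existsUnique_congr
    fun x => (isFixedPt_gaveMap_toLp_iff hA b x).symm]
  exact hf.existsUnique_isFixedPt
end
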